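/- arXiv:1007.2833 — 3 statements merged into one kernel-verified Lean document; each statement's English description precedes it below -/
import Mathlib

section
/- Let X be a nonnegative, extended-real-valued, increasing, right-continuous, progressively measurable process on a filtered probability space, and for M > 0 let σ_M = inf{ r ≥ 0 : X(r) ≥ M }. Suppose there exists an increasing sequence (τ_n) of stopping times with τ_n ↑ ∞ almost surely such that for every fixed n and every t > 0 one has κ_{n,t} := sup_{M>0} E[ X(τ_n ∧ σ_M ∧ t) ] < ∞. Then there is a set Ω̃ ⊆ Ω of full probability such that X(t, ω) < ∞ for all t ∈ [0, ∞) and all ω ∈ Ω̃. -/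
open MeasureTheory Filter Set
open scoped NNReal ENNReal Topology

/-- The hitting time `σ_M(ω) = inf { r ≥ 0 : X(r,ω) ≥ M }`, valued in `[0,∞]`
(with `inf ∅ = ∞`). -/
noncomputable def hitTime {Ω : Type*} (X : ℝ≥0 → Ω → ℝ≥0∞) (M : ℝ≥0) (ω : Ω) : ℝ≥0∞ :=
  sInf ((fun r : ℝ≥0 => (r : ℝ≥0∞)) '' {r : ℝ≥0 | (M : ℝ≥0∞) ≤ X r ω})

/-!
On the event `{X t = ∞, t ≤ τₙ}` every hitting time `σ_M` is at most `t ≤ τₙ`, so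
`X (σ_M ∧ τₙ ∧ t) = X σ_M ≥ M` by right continuity. Markov's inequality then gives
`M · P(X t = ∞, t ≤ τₙ) ≤ κₙ,ₜ < ∞` for every `M`, so this event is null. Since `τₙ → ∞`
almost surely and `X` is nondecreasing, countably many such events cover `{∃ t, X t = ∞}`.
-/

section HitTime

variable {Ω : Type*} {X : ℝ≥0 → Ω → ℝ≥0∞} {M : ℝ≥0} {ω : Ω}

lemma hitTime_le_of_le {t : ℝ≥0} (h : (M : ℝ≥0∞) ≤ X t ω) : hitTime X M ω ≤ t :=
  sInf_le ⟨t, h, rfl⟩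

lemma le_apply_toNNReal_hitTime (hmono : Monotone fun t => X t ω)
    (hrc : ∀ t, ContinuousWithinAt (fun s => X s ω) (Ici t) t) (hfin : hitTime X M ω ≠ ⊤) :
    (M : ℝ≥0∞) ≤ X (hitTime X M ω).toNNReal ω := by
  set a := (hitTime X M ω).toNNReal
  have le_of_gt : ∀ s, a < s → (M : ℝ≥0∞) ≤ X s ω := by
    intro s hs
    have : hitTime X M ω < s := by
      rw [← ENNReal.coe_toNNReal hfin]
      exact_mod_cast hs
    obtain ⟨_, ⟨r, hr, rfl⟩, hrs⟩ := sInf_lt_iff.mp this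
    exact hr.trans (hmono (by simpa using hrs.le))
  have htend : Tendsto (fun s => X s ω) (𝓝[>] a) (𝓝 (X a ω)) :=
    (hrc a).mono_left (nhdsWithin_mono _ Ioi_subset_Ici_self)
  exact ge_of_tendsto htend (eventually_mem_nhdsWithin.mono le_of_gt)

lemma le_apply_stopped_of_eq_top (hmono : Monotone fun t => X t ω)
    (hrc : ∀ t, ContinuousWithinAt (fun s => X s ω) (Ici t) t) {T t : ℝ≥0}
    (hX : X t ω = ⊤) (htT : t ≤ T) :
    (M : ℝ≥0∞) ≤ X ((hitTime X M ω ⊓ (T : ℝ≥0∞) ⊓ (t : ℝ≥0∞)).toNNReal) ω := by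
  have hle_t : hitTime X M ω ≤ t := hitTime_le_of_le (by simp [hX])
  have hle_T : hitTime X M ω ≤ T := hle_t.trans (ENNReal.coe_le_coe.mpr htT)
  rw [inf_eq_left.mpr hle_T, inf_eq_left.mpr hle_t]
  exact le_apply_toNNReal_hitTime hmono hrc (ne_top_of_le_ne_top ENNReal.coe_ne_top hle_t)

end HitTime

lemma ENNReal.eq_zero_of_forall_pos_mul_le {a C : ℝ≥0∞} (hC : C ≠ ⊤)
    (h : ∀ M : ℝ≥0, 0 < M → (M : ℝ≥0∞) * a ≤ C) : a = 0 := by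
  by_contra ha
  have hnat : ∀ n : ℕ, (n : ℝ≥0∞) * a ≤ C := by
    intro n
    rcases n.eq_zero_or_pos with rfl | hn
    · simp
    · exact_mod_cast h n (by exact_mod_cast hn)
  have : ⊤ * a ≤ C := by
    rw [← ENNReal.iSup_natCast, ENNReal.iSup_mul]
    exact iSup_le hnat
  exact hC (top_unique (ENNReal.top_mul ha ▸ this))

lemma MeasureTheory.measure_eq_zero_of_forall_le_of_iSup_lintegral_lt_top {α : Type*}
    [MeasurableSpace α] {μ : Measure α} {s : Set α} (hs : MeasurableSet s)
    (f : ℝ≥0 → α → ℝ≥0∞) (hf : ∀ M : ℝ≥0, 0 < M → ∀ x ∈ s, (M : ℝ≥0∞) ≤ f M x)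
    (hsup : (⨆ (M : ℝ≥0) (_ : 0 < M), ∫⁻ x, f M x ∂μ) < ⊤) : μ s = 0 := by
  refine ENNReal.eq_zero_of_forall_pos_mul_le hsup.ne fun M hM => ?_
  calc (M : ℝ≥0∞) * μ s = ∫⁻ _ in s, (M : ℝ≥0∞) ∂μ := (setLIntegral_const s _).symm
    _ ≤ ∫⁻ x in s, f M x ∂μ := setLIntegral_mono' hs (hf M hM)
    _ ≤ ∫⁻ x, f M x ∂μ := setLIntegral_le_lintegral s _
    _ ≤ ⨆ (M : ℝ≥0) (_ : 0 < M), ∫⁻ x, f M x ∂μ :=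
      le_iSup₂ (f := fun M (_ : 0 < M) => ∫⁻ x, f M x ∂μ) M hM

section StoppedProcess

variable {Ω : Type*} {m : MeasurableSpace Ω} {F : Filtration ℝ≥0 m} {X : ℝ≥0 → Ω → ℝ≥0∞}
  {τ : Ω → ℝ≥0}

lemma measurableSet_le_and_apply_eq_top (hprog : IsStronglyProgressive F X)
    (hτ : IsStoppingTime F fun ω => (τ ω : WithTop ℝ≥0)) (t : ℝ≥0) :
    MeasurableSet {ω | t ≤ τ ω ∧ X t ω = ⊤} := by
  have hX : Measurable (X t) := ((hprog.stronglyAdapted t).measurable).mono (F.le t) le_rfl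
  have hτt : MeasurableSet {ω | t ≤ τ ω} := by
    simpa only [WithTop.coe_le_coe] using F.le t _ (hτ.measurableSet_ge t)
  exact hτt.inter (hX (measurableSet_singleton ⊤))

lemma ae_apply_ne_top_of_le_stoppingTime (P : Measure Ω)
    (hmono : ∀ ω, Monotone fun t => X t ω)
    (hrc : ∀ ω t, ContinuousWithinAt (fun s => X s ω) (Ici t) t)
    (hprog : IsStronglyProgressive F X) (hτ : IsStoppingTime F fun ω => (τ ω : WithTop ℝ≥0))
    {t : ℝ≥0} (hκ : (⨆ (M : ℝ≥0) (_ : 0 < M),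
        ∫⁻ ω, X ((hitTime X M ω ⊓ (τ ω : ℝ≥0∞) ⊓ (t : ℝ≥0∞)).toNNReal) ω ∂P) < ⊤) :
    ∀ᵐ ω ∂P, t ≤ τ ω → X t ω ≠ ⊤ := by
  rw [ae_iff]
  simp only [Classical.not_imp, not_not]
  exact measure_eq_zero_of_forall_le_of_iSup_lintegral_lt_top
    (measurableSet_le_and_apply_eq_top hprog hτ t) _
    (fun _ _ ω hω => le_apply_stopped_of_eq_top (hmono ω) (hrc ω) hω.2 hω.1) hκ

end StoppedProcess

theorem stmt0_general {Ω : Type*} {m : MeasurableSpace Ω} (P : Measure Ω)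
    (F : Filtration ℝ≥0 m) (X : ℝ≥0 → Ω → ℝ≥0∞)
    (hmono : ∀ ω, Monotone fun t => X t ω)
    (hrc : ∀ ω t, ContinuousWithinAt (fun s => X s ω) (Ici t) t)
    (hprog : ProgMeasurable F X)
    (τ : ℕ → Ω → ℝ≥0)
    (hτ : ∀ n, IsStoppingTime F (fun ω => (τ n ω : WithTop ℝ≥0)))
    (hτlim : ∀ᵐ ω ∂P, Tendsto (fun n => τ n ω) atTop atTop)
    (hκ : ∀ (n : ℕ) (t : ℝ≥0), 0 < t →
      (⨆ (M : ℝ≥0) (_ : 0 < M),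
        ∫⁻ ω, X ((hitTime X M ω ⊓ (τ n ω : ℝ≥0∞) ⊓ (t : ℝ≥0∞)).toNNReal) ω ∂P) < ⊤) :
    ∀ᵐ ω ∂P, ∀ t : ℝ≥0, X t ω < ⊤ := by
  have hfin : ∀ᵐ ω ∂P, ∀ n k : ℕ, (k + 1 : ℝ≥0) ≤ τ n ω → X (k + 1) ω ≠ ⊤ :=
    ae_all_iff.2 fun n => ae_all_iff.2 fun k =>
      ae_apply_ne_top_of_le_stoppingTime P hmono hrc hprog (hτ n) (hκ n _ (by positivity))
  filter_upwards [hτlim, hfin] with ω hlim hfin t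
  obtain ⟨k, hk⟩ := exists_nat_ge t
  obtain ⟨n, hn⟩ := (hlim.eventually_ge_atTop (k + 1 : ℝ≥0)).exists
  calc X t ω ≤ X (k + 1) ω := hmono ω (hk.trans (le_add_of_nonneg_right zero_le_one))
    _ < ⊤ := (hfin n k hn).lt_top

theorem stmt0 {Ω : Type*} {m : MeasurableSpace Ω} (P : Measure Ω) [IsProbabilityMeasure P]
    (F : Filtration ℝ≥0 m) (X : ℝ≥0 → Ω → ℝ≥0∞)
    (hmono : ∀ ω, Monotone fun t => X t ω)
    (hrc : ∀ ω t, ContinuousWithinAt (fun s => X s ω) (Ici t) t)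
    (hprog : ProgMeasurable F X)
    (τ : ℕ → Ω → ℝ≥0)
    (hτ : ∀ n, IsStoppingTime F (fun ω => (τ n ω : WithTop ℝ≥0)))
    (hτmono : ∀ ω, Monotone fun n => τ n ω)
    (hτlim : ∀ᵐ ω ∂P, Tendsto (fun n => τ n ω) atTop atTop)
    (hκ : ∀ (n : ℕ) (t : ℝ≥0), 0 < t →
      (⨆ (M : ℝ≥0) (_ : 0 < M),
        ∫⁻ ω, X ((hitTime X M ω ⊓ (τ n ω : ℝ≥0∞) ⊓ (t : ℝ≥0∞)).toNNReal) ω ∂P) < ⊤) :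
    ∀ᵐ ω ∂P, ∀ t : ℝ≥0, X t ω < ⊤ :=
  stmt0_general P F X hmono hrc hprog τ hτ hτlim hκ
end

section
/- Let X be a nonnegative, extended-real-valued, increasing, right-continuous, progressively measurable process, M > 0, σ_M = inf{ r ≥ 0 : X(r) ≥ M }, and let τ be a stopping time. Then for every t > 0, P( σ_M < t ) ≤ (1/M) · E[ X( σ_M ∧ τ ∧ t ) ] + P( τ < t ). -/
/-!
By right-continuity and monotonicity, `X(σ_M) ≥ M` whenever `σ_M < ∞`. On the event
`{σ_M < t ≤ τ}` the time `σ_M ∧ τ ∧ t` equals `σ_M`, so Markov's inequality bounds its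
probability by `M⁻¹ E[X(σ_M ∧ τ ∧ t)]`; the rest of `{σ_M < t}` lies in `{τ < t}`.
-/

open MeasureTheory Filter Set
open scoped NNReal ENNReal Topology

lemma measure_le_inv_mul_lintegral {α : Type*} [MeasurableSpace α] {μ : Measure α}
    {s : Set α} {f : α → ℝ≥0∞} {c : ℝ≥0∞} (hs : MeasurableSet s) (hc₀ : c ≠ 0) (hc : c ≠ ∞)
    (hf : ∀ x ∈ s, c ≤ f x) : μ s ≤ c⁻¹ * ∫⁻ x, f x ∂μ := by
  rw [← ENNReal.mul_le_iff_le_inv hc₀ hc, ← lintegral_indicator_const hs]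
  exact lintegral_mono (indicator_le hf)

section HitTime

variable {Ω : Type*} {X : ℝ≥0 → Ω → ℝ≥0∞} {M : ℝ≥0} {ω : Ω}

lemma hitTime_lt_iff {c : ℝ≥0∞} :
    hitTime X M ω < c ↔ ∃ r : ℝ≥0, (M : ℝ≥0∞) ≤ X r ω ∧ (r : ℝ≥0∞) < c := by
  simp [hitTime, sInf_lt_iff]

lemma hitTime_lt_iff_exists_rat (hmono : Monotone fun t => X t ω) {c : ℝ≥0∞} :
    hitTime X M ω < c ↔
      ∃ q : ℚ, (M : ℝ≥0∞) ≤ X (Real.toNNReal q) ω ∧ (Real.toNNReal q : ℝ≥0∞) < c := by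
  refine ⟨fun h => ?_, fun ⟨q, hq⟩ => hitTime_lt_iff.2 ⟨_, hq⟩⟩
  obtain ⟨r, hr, hrc⟩ := hitTime_lt_iff.1 h
  obtain ⟨q, -, hrq, hqc⟩ := ENNReal.lt_iff_exists_rat_btwn.1 hrc
  exact ⟨q, hr.trans (hmono (ENNReal.coe_lt_coe.1 hrq).le), hqc⟩

lemma le_at_hitTime (hmono : Monotone fun t => X t ω)
    (hrc : ∀ t, ContinuousWithinAt (fun s => X s ω) (Ici t) t) (hfin : hitTime X M ω ≠ ∞) :
    (M : ℝ≥0∞) ≤ X (hitTime X M ω).toNNReal ω := by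
  set s₀ := (hitTime X M ω).toNNReal
  have hafter : ∀ s ∈ Ioi s₀, (M : ℝ≥0∞) ≤ X s ω := fun s hs => by
    obtain ⟨r, hr, hrs⟩ := hitTime_lt_iff.1 <| show hitTime X M ω < s by
      rwa [← ENNReal.coe_toNNReal hfin, ENNReal.coe_lt_coe]
    exact hr.trans (hmono (ENNReal.coe_lt_coe.1 hrs).le)
  exact ge_of_tendsto ((hrc s₀).mono Ioi_subset_Ici_self)
    (eventually_nhdsWithin_of_forall hafter)

lemma measurable_hitTime [MeasurableSpace Ω] (hmono : ∀ ω, Monotone fun t => X t ω)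
    (hX : ∀ r, Measurable (X r)) : Measurable (hitTime X M) := by
  refine measurable_of_Iio fun c => ?_
  have : hitTime X M ⁻¹' Iio c =
      ⋃ (q : ℚ) (_ : (Real.toNNReal q : ℝ≥0∞) < c),
        {ω | (M : ℝ≥0∞) ≤ X (Real.toNNReal q) ω} := by
    ext ω
    simp [hitTime_lt_iff_exists_rat (hmono ω), and_comm]
  rw [this]
  exact .iUnion fun q => .iUnion fun _ => measurableSet_le measurable_const (hX _)

end HitTime

theorem stmt2_general {Ω : Type*} {m : MeasurableSpace Ω} (P : Measure Ω)
    (F : Filtration ℝ≥0 m) (X : ℝ≥0 → Ω → ℝ≥0∞)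
    (hmono : ∀ ω, Monotone fun t => X t ω)
    (hrc : ∀ ω t, ContinuousWithinAt (fun s => X s ω) (Ici t) t)
    (hprog : ProgMeasurable F X)
    (M : ℝ≥0) (hM : 0 < M)
    (τ : Ω → ℝ≥0) (hτ : IsStoppingTime F (fun ω => (τ ω : WithTop ℝ≥0)))
    (t : ℝ≥0) :
    P {ω | hitTime X M ω < (t : ℝ≥0∞)} ≤
      (M : ℝ≥0∞)⁻¹ *
          ∫⁻ ω, X ((hitTime X M ω ⊓ (τ ω : ℝ≥0∞) ⊓ (t : ℝ≥0∞)).toNNReal) ω ∂P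
        + P {ω | τ ω < t} := by
  have hX : ∀ r, Measurable (X r) := fun r =>
    ((IsStronglyProgressive.stronglyAdapted hprog r).mono (F.le r)).measurable
  have hσt : MeasurableSet {ω | hitTime X M ω < (t : ℝ≥0∞)} :=
    measurableSet_lt (measurable_hitTime hmono hX) measurable_const
  have hτt : MeasurableSet {ω | τ ω < t} := by
    simpa only [WithTop.coe_lt_coe] using F.le t _ (hτ.measurableSet_lt t)
  have hM_le : ∀ ω ∈ {ω | hitTime X M ω < (t : ℝ≥0∞)} \ {ω | τ ω < t},
      (M : ℝ≥0∞) ≤ X ((hitTime X M ω ⊓ (τ ω : ℝ≥0∞) ⊓ (t : ℝ≥0∞)).toNNReal) ω := by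
    rintro ω ⟨hσω, hτω⟩
    have hστ : hitTime X M ω ≤ τ ω :=
      hσω.le.trans (ENNReal.coe_le_coe.2 (not_lt.1 hτω))
    rw [inf_eq_left.2 hστ, inf_eq_left.2 hσω.le]
    exact le_at_hitTime (hmono ω) (hrc ω) hσω.ne_top
  calc P {ω | hitTime X M ω < (t : ℝ≥0∞)}
      ≤ P ({ω | hitTime X M ω < (t : ℝ≥0∞)} \ {ω | τ ω < t}) + P {ω | τ ω < t} :=
        (measure_mono (subset_sdiff_union _ _)).trans (measure_union_le _ _)
    _ ≤ _ := by
        gcongr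
        exact measure_le_inv_mul_lintegral (hσt.diff hτt) (by simpa using hM.ne')
          ENNReal.coe_ne_top hM_le

theorem stmt2 {Ω : Type*} {m : MeasurableSpace Ω} (P : Measure Ω) [IsProbabilityMeasure P]
    (F : Filtration ℝ≥0 m) (X : ℝ≥0 → Ω → ℝ≥0∞)
    (hmono : ∀ ω, Monotone fun t => X t ω)
    (hrc : ∀ ω t, ContinuousWithinAt (fun s => X s ω) (Ici t) t)
    (hprog : ProgMeasurable F X)
    (M : ℝ≥0) (hM : 0 < M)
    (τ : Ω → ℝ≥0) (hτ : IsStoppingTime F (fun ω => (τ ω : WithTop ℝ≥0)))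
    (t : ℝ≥0) (ht : 0 < t) :
    P {ω | hitTime X M ω < (t : ℝ≥0∞)} ≤
      (M : ℝ≥0∞)⁻¹ *
          ∫⁻ ω, X ((hitTime X M ω ⊓ (τ ω : ℝ≥0∞) ⊓ (t : ℝ≥0∞)).toNNReal) ω ∂P
        + P {ω | τ ω < t} :=
  stmt2_general P F X hmono hrc hprog M hM τ hτ t
end

section
/- Let L, h > 0 and let u : [0,L] × [−h,0] → ℝ be of class C¹ with u(0,z) = u(L,z) = 0 for all z ∈ [−h,0] and ∫_{−h}^0 u(x,z) dz = 0 for all x ∈ [0,L]; set w(u)(x,z) := ∫_z^0 ∂_x u(x,s) ds. Then for every φ : [0,L] × [−h,0] → ℝ of class C¹, the cancellation identity holds: ∫_M ( u ∂_x φ + w(u) ∂_z φ ) φ dM = 0. -/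
open MeasureTheory Set intervalIntegral

/-- Partial derivative in the first (horizontal, `x`) variable. -/
noncomputable def pdx (f : ℝ × ℝ → ℝ) (p : ℝ × ℝ) : ℝ := fderiv ℝ f p (1, 0)

/-- Partial derivative in the second (vertical, `z`) variable. -/
noncomputable def pdz (f : ℝ × ℝ → ℝ) (p : ℝ × ℝ) : ℝ := fderiv ℝ f p (0, 1)

/-- The diagnostic vertical velocity `w(u)(x,z) = ∫_z^0 ∂ₓ u(x,s) ds`. -/
noncomputable def wOp (u : ℝ × ℝ → ℝ) (p : ℝ × ℝ) : ℝ := ∫ s in p.2..0, pdx u (p.1, s)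

/-- The open domain `M = (0,L) × (-h,0)`. -/
def dom (L h : ℝ) : Set (ℝ × ℝ) := Ioo 0 L ×ˢ Ioo (-h) 0

/-- The closed domain `M̄ = [0,L] × [-h,0]`. -/
def cdom (L h : ℝ) : Set (ℝ × ℝ) := Icc 0 L ×ˢ Icc (-h) 0

/-- The `L²(M)` norm. -/
noncomputable def l2 (L h : ℝ) (f : ℝ × ℝ → ℝ) : ℝ :=
  Real.sqrt (∫ p in dom L h, f p ^ 2)

/-- The `H¹(M)` norm. -/
noncomputable def h1n (L h : ℝ) (f : ℝ × ℝ → ℝ) : ℝ :=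
  Real.sqrt (l2 L h f ^ 2 + l2 L h (pdx f) ^ 2 + l2 L h (pdz f) ^ 2)

/-- The `H²(M)` norm. -/
noncomputable def h2n (L h : ℝ) (f : ℝ × ℝ → ℝ) : ℝ :=
  Real.sqrt (h1n L h f ^ 2 + l2 L h (pdx (pdx f)) ^ 2 + l2 L h (pdx (pdz f)) ^ 2
    + l2 L h (pdz (pdz f)) ^ 2)

/-! Put `P = ∂ₓu · φ²/2`. Integrating by parts in `x`, where `u` vanishes on the lateral walls,
the horizontal term `∫ u φ ∂ₓφ` equals `-∫ P`. Since `∂_z w = -∂ₓu`, integrating by parts in `z`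
turns the vertical term `∫ w φ ∂_zφ` into `+∫ P`; the boundary values of `w` vanish because
`w(x,0) = 0` trivially and `w(x,-h) = ∂ₓ ∫_{-h}^0 u(x,s) ds = 0` by the zero-mean condition. -/

section PartialDerivatives

variable {f : ℝ × ℝ → ℝ}

theorem continuous_pdx (hf : ContDiff ℝ 1 f) : Continuous (pdx f) :=
  (hf.continuous_fderiv one_ne_zero).clm_apply continuous_const

theorem continuous_pdz (hf : ContDiff ℝ 1 f) : Continuous (pdz f) :=
  (hf.continuous_fderiv one_ne_zero).clm_apply continuous_const

theorem hasDerivAt_pdx {x z : ℝ} (hf : DifferentiableAt ℝ f (x, z)) :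
    HasDerivAt (fun t => f (t, z)) (pdx f (x, z)) x :=
  hf.hasFDerivAt.comp_hasDerivAt x ((hasDerivAt_id x).prodMk (hasDerivAt_const x z))

theorem hasDerivAt_pdz {x z : ℝ} (hf : DifferentiableAt ℝ f (x, z)) :
    HasDerivAt (fun t => f (x, t)) (pdz f (x, z)) z :=
  hf.hasFDerivAt.comp_hasDerivAt z ((hasDerivAt_const z x).prodMk (hasDerivAt_id z))

theorem hasDerivAt_intervalIntegral_fst (hf : ContDiff ℝ 1 f) (c d x₀ : ℝ) :
    HasDerivAt (fun x => ∫ s in c..d, f (x, s)) (∫ s in c..d, pdx f (x₀, s)) x₀ := by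
  obtain ⟨C, hC⟩ := (isCompact_closedBall x₀ 1).prod isCompact_uIcc |>.exists_bound_of_continuousOn
    (continuous_pdx hf).continuousOn
  have hsection : ∀ x, Continuous fun s => f (x, s) := fun x =>
    hf.continuous.comp (continuous_const.prodMk continuous_id)
  refine (hasDerivAt_integral_of_dominated_loc_of_deriv_le (bound := fun _ => C)
    (Metric.ball_mem_nhds x₀ one_pos)
    (Filter.Eventually.of_forall fun x => (hsection x).aestronglyMeasurable)
    ((hsection x₀).intervalIntegrable _ _)
    ((continuous_pdx hf).comp (continuous_const.prodMk continuous_id)).aestronglyMeasurable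
    (Filter.Eventually.of_forall fun s hs x hx =>
      hC (x, s) ⟨Metric.ball_subset_closedBall hx, uIoc_subset_uIcc hs⟩)
    intervalIntegrable_const
    (Filter.Eventually.of_forall fun s _ x _ =>
      hasDerivAt_pdx ((hf.differentiable one_ne_zero) (x, s)))).2

theorem intervalIntegral_pdx_eq_zero (hf : ContDiff ℝ 1 f) {a b c d : ℝ} (hab : a < b)
    (hmean : ∀ x ∈ Icc a b, ∫ s in c..d, f (x, s) = 0) {x : ℝ} (hx : x ∈ Icc a b) :
    ∫ s in c..d, pdx f (x, s) = 0 :=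
  (uniqueDiffOn_Icc hab x hx).eq_deriv _
    (hasDerivAt_intervalIntegral_fst hf c d x).hasDerivWithinAt
    ((hasDerivWithinAt_const x _ 0).congr hmean (hmean x hx))

end PartialDerivatives

section VerticalVelocity

variable {u : ℝ × ℝ → ℝ}

theorem hasDerivAt_wOp_snd (hu : Continuous (pdx u)) (x z : ℝ) :
    HasDerivAt (fun t => wOp u (x, t)) (-pdx u (x, z)) z := by
  have hsection : Continuous fun s => pdx u (x, s) :=
    hu.comp (continuous_const.prodMk continuous_id)
  exact integral_hasDerivAt_left (hsection.intervalIntegrable _ _)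
    (hsection.stronglyMeasurableAtFilter _ _) hsection.continuousAt

theorem continuous_wOp (hu : Continuous (pdx u)) : Continuous (wOp u) := by
  have hprimitive : Continuous fun p : ℝ × ℝ => ∫ s in (0 : ℝ)..p.2, pdx u (p.1, s) :=
    continuous_parametric_primitive_of_continuous (f := fun x s => pdx u (x, s))
      (hu.comp (continuous_fst.prodMk continuous_snd))
  convert hprimitive.neg using 1
  funext p
  exact integral_symm _ _

end VerticalVelocity

theorem integral_mul_mul_deriv_eq_neg_integral_deriv_mul_sq {f f' g g' : ℝ → ℝ} {a b : ℝ}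
    (hf : ∀ x ∈ uIcc a b, HasDerivAt f (f' x) x) (hg : ∀ x ∈ uIcc a b, HasDerivAt g (g' x) x)
    (hf' : IntervalIntegrable f' volume a b)
    (hgg' : IntervalIntegrable (fun x => g x * g' x) volume a b) (ha : f a = 0) (hb : f b = 0) :
    ∫ x in a..b, f x * (g x * g' x) = -∫ x in a..b, f' x * (g x ^ 2 / 2) := by
  have hsq : ∀ x ∈ uIcc a b, HasDerivAt (fun t => g t ^ 2 / 2) (g x * g' x) x := fun x hx => by
    refine (((hg x hx).fun_pow 2).div_const 2).congr_deriv ?_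
    ring
  rw [integral_mul_deriv_eq_deriv_mul hf hsq hf' hgg', ha, hb]
  ring

section Rectangle

variable {G : ℝ × ℝ → ℝ} {a b c d : ℝ}

theorem setIntegral_Ioo_prod_Ioo (hab : a ≤ b) (hcd : c ≤ d)
    (hG : IntegrableOn G (Ioo a b ×ˢ Ioo c d)) :
    ∫ p in Ioo a b ×ˢ Ioo c d, G p = ∫ x in a..b, ∫ z in c..d, G (x, z) := by
  rw [Measure.volume_eq_prod] at hG ⊢
  simp only [setIntegral_prod G hG, integral_of_le hab, integral_of_le hcd,
    integral_Ioc_eq_integral_Ioo]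

theorem setIntegral_Ioo_prod_Ioo_swap (hab : a ≤ b) (hcd : c ≤ d)
    (hG : IntegrableOn G (Ioo a b ×ˢ Ioo c d)) :
    ∫ p in Ioo a b ×ˢ Ioo c d, G p = ∫ z in c..d, ∫ x in a..b, G (x, z) := by
  rw [setIntegral_Ioo_prod_Ioo hab hcd hG]
  rw [IntegrableOn, Measure.volume_eq_prod, ← Measure.prod_restrict] at hG
  simp only [integral_of_le hab, integral_of_le hcd, integral_Ioc_eq_integral_Ioo]
  exact integral_integral_swap hG

end Rectangle

theorem ContinuousOn.integrableOn_dom {G : ℝ × ℝ → ℝ} {L h : ℝ} (hG : ContinuousOn G (cdom L h)) :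
    IntegrableOn G (dom L h) :=
  (hG.integrableOn_compact (isCompact_Icc.prod isCompact_Icc)).mono_set
    (prod_mono Ioo_subset_Icc_self Ioo_subset_Icc_self)

section Cancellation

variable {L h : ℝ} {u φ : ℝ × ℝ → ℝ}

theorem integrableOn_dom_pdx_mul_sq_div_two (hu : ContDiff ℝ 1 u) (hφ : ContDiff ℝ 1 φ) :
    IntegrableOn (fun p => pdx u p * (φ p ^ 2 / 2)) (dom L h) :=
  ((continuous_pdx hu).mul ((hφ.continuous.pow 2).div_const 2)).continuousOn.integrableOn_dom

theorem integral_dom_mul_mul_pdx (hL : 0 ≤ L) (hh : 0 ≤ h) (hu : ContDiff ℝ 1 u)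
    (hφ : ContDiff ℝ 1 φ) (hlat : ∀ z ∈ Icc (-h) (0:ℝ), u (0, z) = 0 ∧ u (L, z) = 0) :
    ∫ p in dom L h, u p * (φ p * pdx φ p) = -∫ p in dom L h, pdx u p * (φ p ^ 2 / 2) := by
  have hmh : -h ≤ 0 := neg_nonpos.mpr hh
  have hrow : ∀ z : ℝ, Continuous fun x : ℝ => (x, z) := fun z => continuous_id.prodMk continuous_const
  have hibp : ∀ z ∈ uIcc (-h) 0, ∫ x in (0:ℝ)..L, u (x, z) * (φ (x, z) * pdx φ (x, z)) =
      -∫ x in (0:ℝ)..L, pdx u (x, z) * (φ (x, z) ^ 2 / 2) := fun z hz => by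
    rw [uIcc_of_le hmh] at hz
    exact integral_mul_mul_deriv_eq_neg_integral_deriv_mul_sq
      (fun x _ => hasDerivAt_pdx ((hu.differentiable one_ne_zero) (x, z)))
      (fun x _ => hasDerivAt_pdx ((hφ.differentiable one_ne_zero) (x, z)))
      (((continuous_pdx hu).comp (hrow z)).intervalIntegrable _ _)
      (((hφ.continuous.comp (hrow z)).mul ((continuous_pdx hφ).comp (hrow z))).intervalIntegrable _ _)
      (hlat z hz).1 (hlat z hz).2
  rw [dom, setIntegral_Ioo_prod_Ioo_swap hL hmh, setIntegral_Ioo_prod_Ioo_swap hL hmh,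
    integral_congr hibp, intervalIntegral.integral_neg]
  · exact integrableOn_dom_pdx_mul_sq_div_two hu hφ
  · exact (hu.continuous.mul (hφ.continuous.mul (continuous_pdx hφ))).continuousOn.integrableOn_dom

theorem integral_dom_wOp_mul_mul_pdz (hL : 0 < L) (hh : 0 ≤ h) (hu : ContDiff ℝ 1 u)
    (hφ : ContDiff ℝ 1 φ) (hmean : ∀ x ∈ Icc (0:ℝ) L, (∫ z in (-h)..(0:ℝ), u (x, z)) = 0) :
    ∫ p in dom L h, wOp u p * (φ p * pdz φ p) = ∫ p in dom L h, pdx u p * (φ p ^ 2 / 2) := by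
  have hmh : -h ≤ 0 := neg_nonpos.mpr hh
  have hcol : ∀ x : ℝ, Continuous fun z : ℝ => (x, z) := fun x => continuous_const.prodMk continuous_id
  have hibp : ∀ x ∈ uIcc 0 L, ∫ z in (-h)..0, wOp u (x, z) * (φ (x, z) * pdz φ (x, z)) =
      ∫ z in (-h)..0, pdx u (x, z) * (φ (x, z) ^ 2 / 2) := fun x hx => by
    rw [uIcc_of_le hL.le] at hx
    have hbottom : wOp u (x, -h) = 0 := intervalIntegral_pdx_eq_zero hu hL hmean hx
    have htop : wOp u (x, 0) = 0 := integral_same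
    rw [integral_mul_mul_deriv_eq_neg_integral_deriv_mul_sq
      (fun z _ => hasDerivAt_wOp_snd (continuous_pdx hu) x z)
      (fun z _ => hasDerivAt_pdz ((hφ.differentiable one_ne_zero) (x, z)))
      (((continuous_pdx hu).comp (hcol x)).neg.intervalIntegrable _ _)
      (((hφ.continuous.comp (hcol x)).mul ((continuous_pdz hφ).comp (hcol x))).intervalIntegrable _ _)
      hbottom htop]
    simp only [neg_mul, intervalIntegral.integral_neg, neg_neg]
  rw [dom, setIntegral_Ioo_prod_Ioo hL.le hmh, setIntegral_Ioo_prod_Ioo hL.le hmh,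
    integral_congr hibp]
  · exact integrableOn_dom_pdx_mul_sq_div_two hu hφ
  · exact ((continuous_wOp (continuous_pdx hu)).mul
      (hφ.continuous.mul (continuous_pdz hφ))).continuousOn.integrableOn_dom

end Cancellation

theorem stmt8 (L h : ℝ) (hL : 0 < L) (hh : 0 < h)
    (u φ : ℝ × ℝ → ℝ) (hu : ContDiff ℝ 1 u) (hφ : ContDiff ℝ 1 φ)
    (hlat : ∀ z ∈ Icc (-h) (0:ℝ), u (0, z) = 0 ∧ u (L, z) = 0)
    (hmean : ∀ x ∈ Icc (0:ℝ) L, (∫ z in (-h)..(0:ℝ), u (x, z)) = 0) :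
    (∫ p in dom L h, (u p * pdx φ p + wOp u p * pdz φ p) * φ p) = 0 := by
  have hφc := hφ.continuous
  calc (∫ p in dom L h, (u p * pdx φ p + wOp u p * pdz φ p) * φ p)
      = ∫ p in dom L h, u p * (φ p * pdx φ p) + wOp u p * (φ p * pdz φ p) := by
        congr 1; funext p; ring
    _ = (∫ p in dom L h, u p * (φ p * pdx φ p)) + ∫ p in dom L h, wOp u p * (φ p * pdz φ p) :=
        integral_add
          (hu.continuous.mul (hφc.mul (continuous_pdx hφ))).continuousOn.integrableOn_dom
          ((continuous_wOp (continuous_pdx hu)).mul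
            (hφc.mul (continuous_pdz hφ))).continuousOn.integrableOn_dom
    _ = 0 := by
        rw [integral_dom_mul_mul_pdx hL.le hh.le hu hφ hlat,
          integral_dom_wOp_mul_mul_pdz hL hh.le hu hφ hmean, neg_add_cancel]
end
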